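/- The Volterra operator algebra A_V does not admit a gauge action: there is no family (γ_λ)_{λ∈𝕋}, indexed by the unit circle 𝕋 ⊂ ℂ, of surjective multiplicative linear isometries of A_V onto itself satisfying γ_λ ∘ γ_μ = γ_{λμ} for all λ, μ ∈ 𝕋, γ_λ(V) = λV for all λ ∈ 𝕋, and such that for each S ∈ A_V the map λ ↦ γ_λ(S) is continuous in the operator norm. -/

import Mathlib

open MeasureTheory
open scoped ENNReal

noncomputable section

/-- Lebesgue measure restricted to `[0,1]`. -/
def μ01 : Measure ℝ := volume.restrict (Set.Icc (0:ℝ) 1)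

/-- `L²([0,1])` over `ℂ`. -/
abbrev L2 : Type := Lp ℂ 2 μ01

/-- `A_V`: the operator-norm closure of the polynomials in `V` with zero constant term. -/
def polyAlgV (V : L2 →L[ℂ] L2) : Set (L2 →L[ℂ] L2) :=
  closure ((NonUnitalAlgebra.adjoin ℂ {V} : NonUnitalSubalgebra ℂ (L2 →L[ℂ] L2)) :
    Set (L2 →L[ℂ] L2))

/-- A gauge action on `A_V`: a family `γ_λ` (for `λ` in the unit circle) of surjective
multiplicative linear isometries of `A_V` onto itself with `γ_λ ∘ γ_μ = γ_{λμ}`,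
`γ_λ V = λ V`, and norm-continuity of `λ ↦ γ_λ S` for each `S ∈ A_V`. -/
structure GaugeAction (V : L2 →L[ℂ] L2) where
  γ : ℂ → (L2 →L[ℂ] L2) → (L2 →L[ℂ] L2)
  maps_to : ∀ l : ℂ, ‖l‖ = 1 → ∀ S ∈ polyAlgV V, γ l S ∈ polyAlgV V
  surj_on : ∀ l : ℂ, ‖l‖ = 1 → ∀ S ∈ polyAlgV V, ∃ R ∈ polyAlgV V, γ l R = S
  map_add : ∀ l : ℂ, ‖l‖ = 1 → ∀ S ∈ polyAlgV V, ∀ R ∈ polyAlgV V,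
    γ l (S + R) = γ l S + γ l R
  map_smul : ∀ l : ℂ, ‖l‖ = 1 → ∀ c : ℂ, ∀ S ∈ polyAlgV V, γ l (c • S) = c • γ l S
  map_mul : ∀ l : ℂ, ‖l‖ = 1 → ∀ S ∈ polyAlgV V, ∀ R ∈ polyAlgV V,
    γ l (S * R) = γ l S * γ l R
  isometric : ∀ l : ℂ, ‖l‖ = 1 → ∀ S ∈ polyAlgV V, ‖γ l S‖ = ‖S‖
  comp : ∀ l m : ℂ, ‖l‖ = 1 → ‖m‖ = 1 → ∀ S ∈ polyAlgV V, γ l (γ m S) = γ (l * m) S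
  map_gen : ∀ l : ℂ, ‖l‖ = 1 → γ l V = l • V
  cont : ∀ S ∈ polyAlgV V, ContinuousOn (fun l => γ l S) {l : ℂ | ‖l‖ = 1}

/-!
The automorphism `γ (-1)` sends `V` to `-V`, hence `V + V²` to `-(V - V²)`, so a gauge action
forces `‖V + V²‖ = ‖V - V²‖`. But `(V + V²) 1 = x + x² / 2` has squared norm `19 / 30`, while
`‖V - V²‖² ≤ 1 / 2`: with `F = V ξ` we have
`(V - V²) ξ (x) = ∫₀ˣ (F x - F t) dt + (1 - x) F x`, and `‖F x‖`, `‖F x - F t‖` are both at most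
`∫₀ˣ ‖ξ‖ ≤ √x ‖ξ‖`.
-/

open Set intervalIntegral

instance : IsFiniteMeasure μ01 := by
  rw [μ01]; infer_instance

lemma ae_mem_Icc_μ01 : ∀ᵐ x ∂μ01, x ∈ Icc (0:ℝ) 1 :=
  ae_restrict_mem measurableSet_Icc

lemma μ01_restrict_Ioc {x : ℝ} (hx : x ≤ 1) :
    μ01.restrict (Ioc 0 x) = volume.restrict (Ioc 0 x) := by
  rw [μ01, Measure.restrict_restrict measurableSet_Ioc,
    inter_eq_self_of_subset_left (Ioc_subset_Icc_self.trans (Icc_subset_Icc_right hx))]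

lemma intervalIntegral_eq_integral_μ01 {E : Type*} [NormedAddCommGroup E] [NormedSpace ℝ E]
    (f : ℝ → E) {x : ℝ} (hx : x ∈ Icc (0:ℝ) 1) :
    ∫ t in 0..x, f t = ∫ t in Ioc 0 x, f t ∂μ01 := by
  rw [integral_of_le hx.1, μ01_restrict_Ioc hx.2]

lemma intervalIntegral_congr_μ01 {E : Type*} [NormedAddCommGroup E] [NormedSpace ℝ E]
    {f g : ℝ → E} (h : f =ᵐ[μ01] g) {x : ℝ} (hx : x ∈ Icc (0:ℝ) 1) :
    ∫ t in 0..x, f t = ∫ t in 0..x, g t := by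
  rw [intervalIntegral_eq_integral_μ01 f hx, intervalIntegral_eq_integral_μ01 g hx]
  exact integral_congr_ae (ae_restrict_of_ae h)

lemma integral_μ01 (f : ℝ → ℝ) : ∫ x, f x ∂μ01 = ∫ x in 0..1, f x := by
  rw [integral_of_le zero_le_one, μ01, integral_Icc_eq_integral_Ioc]

lemma integrable_μ01_of_continuous {f : ℝ → ℝ} (hf : Continuous f) : Integrable f μ01 :=
  hf.integrableOn_Icc

lemma Lp.norm_sq_eq_integral_norm_sq {α 𝕜 E : Type*} [MeasurableSpace α] {μ : Measure α}
    [RCLike 𝕜] [NormedAddCommGroup E] [InnerProductSpace 𝕜 E] (f : Lp E 2 μ) :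
    ‖f‖ ^ 2 = ∫ x, ‖f x‖ ^ 2 ∂μ := by
  rw [← inner_self_eq_norm_sq (𝕜 := 𝕜) f, L2.inner_def, ← integral_re (L2.integrable_inner f f)]
  simp_rw [inner_self_eq_norm_sq]

lemma Lp.integrable_norm_sq {α E : Type*} [MeasurableSpace α] {μ : Measure α}
    [NormedAddCommGroup E] (f : Lp E 2 μ) : Integrable (fun x => ‖f x‖ ^ 2) μ :=
  (Lp.memLp f).integrable_norm_pow two_ne_zero

lemma norm_const_one_L2 : ‖(Lp.const 2 μ01 (1:ℂ) : L2)‖ = 1 := by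
  rw [Lp.norm_const' _ _ _ two_ne_zero ENNReal.ofNat_ne_top, μ01, measureReal_restrict_apply_univ,
    Real.volume_real_Icc]
  norm_num

lemma integrableOn_Icc_L2 (ξ : L2) : IntegrableOn ξ (Icc (0:ℝ) 1) :=
  (Lp.memLp ξ).integrable one_le_two

lemma integral_norm_le_sqrt_measure_mul_sqrt {α E : Type*} [MeasurableSpace α] {ν : Measure α}
    [IsFiniteMeasure ν] [NormedAddCommGroup E] {f : α → E} (hf : MemLp f 2 ν) :
    ∫ x, ‖f x‖ ∂ν ≤ √(ν.real univ) * √(∫ x, ‖f x‖ ^ 2 ∂ν) := by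
  have hpq : Real.HolderConjugate 2 2 := by constructor <;> norm_num
  have key := integral_mul_le_Lp_mul_Lq_of_nonneg (μ := ν) hpq
    (Filter.Eventually.of_forall fun x => norm_nonneg (f x))
    (Filter.Eventually.of_forall fun _ => zero_le_one) (by simpa using hf.norm)
    (memLp_const (1:ℝ))
  simp only [MeasureTheory.integral_const, smul_eq_mul, ← Real.sqrt_eq_rpow, Real.rpow_two,
    one_pow, mul_one] at key
  rwa [mul_comm] at key

lemma intervalIntegral_norm_le_sqrt_mul_norm (ξ : L2) {x : ℝ} (hx : x ∈ Icc (0:ℝ) 1) :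
    ∫ t in 0..x, ‖ξ t‖ ≤ √x * ‖ξ‖ := by
  have hvol : (μ01.restrict (Ioc 0 x)).real univ = x := by
    rw [μ01_restrict_Ioc hx.2, measureReal_restrict_apply_univ, Real.volume_real_Ioc_of_le hx.1,
      sub_zero]
  have hsq : ∫ t in Ioc 0 x, ‖ξ t‖ ^ 2 ∂μ01 ≤ ‖ξ‖ ^ 2 := by
    rw [Lp.norm_sq_eq_integral_norm_sq (𝕜 := ℂ)]
    exact setIntegral_le_integral (Lp.integrable_norm_sq ξ)
      (Filter.Eventually.of_forall fun t => sq_nonneg _)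
  calc ∫ t in 0..x, ‖ξ t‖
      ≤ √x * √(∫ t in Ioc 0 x, ‖ξ t‖ ^ 2 ∂μ01) := by
        have h := integral_norm_le_sqrt_measure_mul_sqrt ((Lp.memLp ξ).restrict (Ioc 0 x))
        rwa [hvol, ← intervalIntegral_eq_integral_μ01 _ hx] at h
    _ ≤ √x * ‖ξ‖ := by
        gcongr
        exact Real.sqrt_le_sqrt hsq |>.trans_eq (Real.sqrt_sq (norm_nonneg _))

section Primitive

variable {E : Type*} [NormedAddCommGroup E] [NormedSpace ℝ E]

lemma norm_sub_intervalIntegral_le [CompleteSpace E] {F : ℝ → E} {x C : ℝ}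
    (hx : x ∈ Icc (0:ℝ) 1) (hF : IntervalIntegrable F volume 0 x) (hFx : ‖F x‖ ≤ C)
    (hC : ∀ t ∈ Icc 0 x, ‖F x - F t‖ ≤ C) :
    ‖F x - ∫ t in 0..x, F t‖ ≤ C := by
  have hsplit : F x - ∫ t in 0..x, F t = (∫ t in 0..x, (F x - F t)) + (1 - x) • F x := by
    rw [integral_sub intervalIntegrable_const hF, intervalIntegral.integral_const, sub_zero,
      sub_smul, one_smul]
    abel
  have hmain : ‖∫ t in 0..x, (F x - F t)‖ ≤ C * x := by
    have h := norm_integral_le_of_norm_le_const fun t ht =>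
      hC t (Ioc_subset_Icc_self (uIoc_of_le hx.1 ▸ ht))
    rwa [sub_zero, abs_of_nonneg hx.1] at h
  have hrest : ‖(1 - x) • F x‖ ≤ (1 - x) * C := by
    rw [norm_smul, Real.norm_of_nonneg (sub_nonneg.2 hx.2)]
    exact mul_le_mul_of_nonneg_left hFx (sub_nonneg.2 hx.2)
  calc ‖F x - ∫ t in 0..x, F t‖ ≤ C * x + (1 - x) * C := hsplit ▸ norm_add_le_of_le hmain hrest
    _ = C := by ring

lemma norm_intervalIntegral_sub_le {ξ : ℝ → E} {x t : ℝ} (hξ : IntervalIntegrable ξ volume 0 x)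
    (ht : t ∈ Icc 0 x) :
    ‖(∫ s in 0..x, ξ s) - ∫ s in 0..t, ξ s‖ ≤ ∫ s in 0..x, ‖ξ s‖ := by
  rw [integral_interval_sub_left hξ (hξ.mono_set (uIcc_subset_uIcc_left (Icc_subset_uIcc ht)))]
  calc ‖∫ s in t..x, ξ s‖ ≤ ∫ s in t..x, ‖ξ s‖ := norm_integral_le_integral_norm ht.2
    _ ≤ ∫ s in 0..x, ‖ξ s‖ := integral_mono_interval ht.1 ht.2 le_rfl
        (Filter.Eventually.of_forall fun s => norm_nonneg _) hξ.norm

end Primitive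

def IsVolterraOperator (V : L2 →L[ℂ] L2) : Prop :=
  ∀ ρ : L2, ∀ᵐ x ∂μ01, (V ρ) x = ∫ t in (0:ℝ)..x, ρ t

namespace IsVolterraOperator

variable {V : L2 →L[ℂ] L2}

lemma apply_const_one (hV : IsVolterraOperator V) :
    V (Lp.const 2 μ01 1) =ᵐ[μ01] fun x => (x : ℂ) := by
  filter_upwards [hV (Lp.const 2 μ01 1), ae_mem_Icc_μ01] with x hx hmem
  rw [hx, intervalIntegral_congr_μ01 (Lp.coeFn_const 2 μ01 (1:ℂ)) hmem]
  simp

lemma apply_apply_const_one (hV : IsVolterraOperator V) :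
    V (V (Lp.const 2 μ01 1)) =ᵐ[μ01] fun x => ((x ^ 2 / 2 : ℝ) : ℂ) := by
  filter_upwards [hV (V (Lp.const 2 μ01 1)), ae_mem_Icc_μ01] with x hx hmem
  rw [hx, intervalIntegral_congr_μ01 hV.apply_const_one hmem, intervalIntegral.integral_ofReal,
    integral_id]
  norm_num

lemma norm_add_mul_self_apply_const_one_sq (hV : IsVolterraOperator V) :
    ‖(V + V * V) (Lp.const 2 μ01 1)‖ ^ 2 = 19 / 30 := by
  have hrep : (V + V * V) (Lp.const 2 μ01 1) =ᵐ[μ01] fun x => ((x + x ^ 2 / 2 : ℝ) : ℂ) := by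
    filter_upwards [Lp.coeFn_add (V (Lp.const 2 μ01 1)) (V (V (Lp.const 2 μ01 1))),
      hV.apply_const_one, hV.apply_apply_const_one] with x hadd h1 h2
    rw [add_apply, mul_apply_eq_comp, hadd, Pi.add_apply, h1, h2]
    push_cast
    ring
  have hnorm : (fun x => ‖(V + V * V) (Lp.const 2 μ01 1) x‖ ^ 2) =ᵐ[μ01]
      fun x => (x + x ^ 2 / 2) ^ 2 := by
    filter_upwards [hrep] with x hx
    rw [hx, Complex.norm_real, Real.norm_eq_abs, sq_abs]
  rw [Lp.norm_sq_eq_integral_norm_sq (𝕜 := ℂ), integral_congr_ae hnorm, integral_μ01]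
  have hexp : ∀ x : ℝ, (x + x ^ 2 / 2) ^ 2 = x ^ 2 + x ^ 3 + x ^ 4 / 4 := fun x => by ring
  simp_rw [hexp]
  have hint : ∀ n : ℕ, IntervalIntegrable (fun x : ℝ => x ^ n) volume 0 1 := fun n =>
    (continuous_pow n).intervalIntegrable 0 1
  rw [intervalIntegral.integral_add ((hint 2).add (hint 3)) ((hint 4).div_const 4),
    intervalIntegral.integral_add (hint 2) (hint 3),
    intervalIntegral.integral_div, integral_pow, integral_pow, integral_pow]
  norm_num

lemma le_norm_add_mul_self_sq (hV : IsVolterraOperator V) : 19 / 30 ≤ ‖V + V * V‖ ^ 2 := by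
  have h := (V + V * V).le_opNorm (Lp.const 2 μ01 1)
  rw [norm_const_one_L2, mul_one] at h
  rw [← hV.norm_add_mul_self_apply_const_one_sq]
  gcongr

lemma norm_sub_mul_self_apply_le (hV : IsVolterraOperator V) (ξ : L2) :
    ∀ᵐ x ∂μ01, ‖((V - V * V) ξ) x‖ ≤ √x * ‖ξ‖ := by
  filter_upwards [Lp.coeFn_sub (V ξ) (V (V ξ)), hV ξ, hV (V ξ), ae_mem_Icc_μ01]
    with x hsub h1 h2 hx
  have hξ : IntegrableOn ξ (uIcc 0 x) :=
    (integrableOn_Icc_L2 ξ).mono_set (uIcc_of_le hx.1 ▸ Icc_subset_Icc_right hx.2)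
  have hVV : V (V ξ) x = ∫ t in 0..x, ∫ s in 0..t, ξ s :=
    h2.trans (intervalIntegral_congr_μ01 (hV ξ) hx)
  rw [sub_apply, mul_apply_eq_comp, hsub, Pi.sub_apply, h1, hVV]
  refine (norm_sub_intervalIntegral_le hx
    (continuousOn_primitive_interval hξ).intervalIntegrable ?_ fun t ht =>
      norm_intervalIntegral_sub_le hξ.intervalIntegrable ht).trans
    (intervalIntegral_norm_le_sqrt_mul_norm ξ hx)
  simpa using norm_intervalIntegral_sub_le hξ.intervalIntegrable ⟨le_rfl, hx.1⟩

lemma norm_sub_mul_self_sq_le (hV : IsVolterraOperator V) : ‖V - V * V‖ ^ 2 ≤ 1 / 2 := by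
  have hbound : ∀ ξ : L2, ‖(V - V * V) ξ‖ ≤ √(1 / 2) * ‖ξ‖ := by
    intro ξ
    refine (pow_le_pow_iff_left₀ (norm_nonneg _) (by positivity) two_ne_zero).mp ?_
    calc ‖(V - V * V) ξ‖ ^ 2 = ∫ x, ‖((V - V * V) ξ) x‖ ^ 2 ∂μ01 :=
          Lp.norm_sq_eq_integral_norm_sq (𝕜 := ℂ) _
      _ ≤ ∫ x, x * ‖ξ‖ ^ 2 ∂μ01 := by
          refine integral_mono_ae (Lp.integrable_norm_sq _)
            (integrable_μ01_of_continuous (by fun_prop)) ?_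
          filter_upwards [hV.norm_sub_mul_self_apply_le ξ, ae_mem_Icc_μ01] with x h hx
          calc ‖((V - V * V) ξ) x‖ ^ 2 ≤ (√x * ‖ξ‖) ^ 2 := by gcongr
            _ = x * ‖ξ‖ ^ 2 := by rw [mul_pow, Real.sq_sqrt hx.1]
      _ = (√(1 / 2) * ‖ξ‖) ^ 2 := by
          rw [MeasureTheory.integral_mul_const, integral_μ01, integral_id, mul_pow,
            Real.sq_sqrt (by norm_num)]
          norm_num
  calc ‖V - V * V‖ ^ 2 ≤ √(1 / 2) ^ 2 := by
        gcongr
        exact (V - V * V).opNorm_le_bound (Real.sqrt_nonneg _) hbound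
    _ = 1 / 2 := Real.sq_sqrt (by norm_num)

end IsVolterraOperator

lemma mem_polyAlgV_of_mem_adjoin {V S : L2 →L[ℂ] L2} (h : S ∈ NonUnitalAlgebra.adjoin ℂ {V}) :
    S ∈ polyAlgV V :=
  subset_closure h

lemma GaugeAction.norm_add_mul_self_eq {V : L2 →L[ℂ] L2} (G : GaugeAction V) :
    ‖V + V * V‖ = ‖V - V * V‖ := by
  have hn : ‖(-1 : ℂ)‖ = 1 := by norm_num
  have hV := NonUnitalAlgebra.self_mem_adjoin_singleton ℂ V
  have hflip : G.γ (-1) (V + V * V) = -(V - V * V) := by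
    rw [G.map_add _ hn _ (mem_polyAlgV_of_mem_adjoin hV) _
        (mem_polyAlgV_of_mem_adjoin (mul_mem hV hV)),
      G.map_mul _ hn _ (mem_polyAlgV_of_mem_adjoin hV) _ (mem_polyAlgV_of_mem_adjoin hV),
      G.map_gen _ hn, neg_one_smul, neg_mul_neg]
    abel
  rw [← G.isometric _ hn _ (mem_polyAlgV_of_mem_adjoin (add_mem hV (mul_mem hV hV))), hflip,
    norm_neg]

/-- The Volterra operator algebra `A_V` does not admit a gauge action. -/
theorem volterra_no_gaugeAction (V : L2 →L[ℂ] L2)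
    (hV : ∀ ρ : L2, ∀ᵐ x ∂μ01, (V ρ) x = ∫ t in (0:ℝ)..x, ρ t) :
    ¬ Nonempty (GaugeAction V) := by
  rintro ⟨G⟩
  have hlow : 19 / 30 ≤ ‖V + V * V‖ ^ 2 := IsVolterraOperator.le_norm_add_mul_self_sq hV
  have hup : ‖V - V * V‖ ^ 2 ≤ 1 / 2 := IsVolterraOperator.norm_sub_mul_self_sq_le hV
  rw [G.norm_add_mul_self_eq] at hlow
  linarith
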